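/- arXiv:2212.05692 — 8 statements merged into one kernel-verified Lean document; each statement's English description precedes it below -/
import Mathlib

section
/- Let 0 < α < β be real numbers with α ≥ 1 + √5, and assume that either α ≥ 4 or β ≤ 8/(α(4 − α)). Then for all q₂, q₃, q₄ ∈ [α, β] there exists a point x₀ ∈ (1, α) such that S_{q₂,q₃,q₄}(x₀) ≤ 0. -/
/-- The polynomial `S_{q₂,q₃,q₄}(x) = 1 - x + x²/q₂ - x³/(q₂² q₃) + x⁴/(q₂³ q₃² q₄)`. -/
noncomputable def Spoly (q2 q3 q4 x : ℝ) : ℝ :=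
  1 - x + x ^ 2 / q2 - x ^ 3 / (q2 ^ 2 * q3) + x ^ 4 / (q2 ^ 3 * q3 ^ 2 * q4)

set_option maxHeartbeats 1000000

private lemma aux_cube (a : ℝ) (h3 : 3 ≤ a) (h2 : 2*a + 4 ≤ a^2) : 32 ≤ a^3 := by
  nlinarith

private lemma aux_h8 (a b q2 q3 : ℝ) (h3 : 3 ≤ a) (hq2l : a ≤ q2) (hq3l : a ≤ q3)
    (hq3r : q3 ≤ b) (hb8 : a*b*(4-a) ≤ 8) (h4 : q2 < 4) : q2*q3*(4-q2) ≤ 8 := by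
  have h1 : q2*(4-q2) ≤ a*(4-a) := by nlinarith
  have h2 : 0 ≤ q2*(4-q2) := by nlinarith
  have h3 : (0:ℝ) ≤ b := by linarith
  have h5 := mul_le_mul hq3r h1 h2 h3
  nlinarith [h5]

private lemma aux_h8' (q2 q3 : ℝ) (h4 : 4 ≤ q2) (hq3 : 0 < q3) : q2*q3*(4-q2) ≤ 8 := by
  have h1 : q2*q3*(4-q2) ≤ 0 :=
    mul_nonpos_of_nonneg_of_nonpos (by positivity) (by linarith)
  linarith

private lemma aux_main (b q3 u v : ℝ) (hvpos : 0 < v) (huv : v ≤ u) (hu4 : u^2 ≤ 4)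
    (hv3 : 3 ≤ v^2) (hβb : v^2 ≤ b) (hq3r : q3 ≤ b) (hb8 : v^2*b*(4-v^2) ≤ 8) :
    q3*(v*(u^2*(4-u^2))) + 8*u ≤ 16*v := by
  have hupos : 0 < u := lt_of_lt_of_le hvpos huv
  have hb3 : 3 ≤ b := by nlinarith
  have hq3b : q3*(v*(u^2*(4-u^2))) ≤ b*(v*(u^2*(4-u^2))) := by
    apply mul_le_mul_of_nonneg_right hq3r
    have h1 : (0:ℝ) ≤ 4 - u^2 := by linarith
    positivity
  have hkey2 : 8 ≤ b*v*(u+v)*(u^2+v^2-4) := by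
    have h1 : 2*v ≤ u + v := by linarith
    have h2 : 2*v^2 - 4 ≤ u^2 + v^2 - 4 := by nlinarith
    have h3 : (0:ℝ) ≤ 2*v^2 - 4 := by nlinarith
    have hchain : 2*v*(2*v^2-4) ≤ (u+v)*(u^2+v^2-4) :=
      mul_le_mul h1 h2 h3 (by positivity)
    have hbv : 0 < b*v := by positivity
    have := mul_le_mul_of_nonneg_left hchain hbv.le
    nlinarith [mul_le_mul hb3 hv3 (by norm_num) (by linarith)]
  have hfact : (0:ℝ) ≤ (u - v)*(b*v*(u+v)*(u^2+v^2-4) - 8) :=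
    mul_nonneg (by linarith) (by linarith)
  have hid : 16*v - (b*(v*(u^2*(4-u^2))) + 8*u)
      = v*(8 - v^2*b*(4-v^2)) + (u-v)*(b*v*(u+v)*(u^2+v^2-4) - 8) := by ring
  have hterm1 : 0 ≤ v*(8 - v^2*b*(4-v^2)) := mul_nonneg hvpos.le (by linarith)
  linarith

private lemma aux_xlt (a : ℝ) (h0 : 0 < a) (h2 : 2*a + 4 ≤ a^2) :
    a*(4-a)^2 + 16 < a^3 := by nlinarith

private lemma aux_w2 (q2 q4 : ℝ) (h : 0 < q2) (h2 : q2 ≤ 4*q4) :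
    (q2^2/2)^2 ≤ q2^3*q4 := by nlinarith [pow_pos h 2, pow_pos h 3]

/-- If `0 < α < β`, `α ≥ 1 + √5` and either `α ≥ 4` or `β ≤ 8/(α(4-α))`, then for all
`q₂, q₃, q₄ ∈ [α, β]` there is `x₀ ∈ (1, α)` with `S_{q₂,q₃,q₄}(x₀) ≤ 0`. -/
theorem hutchinson_lemma_sufficiency (α β : ℝ) (h0 : 0 < α) (hαβ : α < β)
    (hα : 1 + Real.sqrt 5 ≤ α) (hβ : 4 ≤ α ∨ β ≤ 8 / (α * (4 - α))) :
    ∀ q2 ∈ Set.Icc α β, ∀ q3 ∈ Set.Icc α β, ∀ q4 ∈ Set.Icc α β,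
      ∃ x0 ∈ Set.Ioo (1 : ℝ) α, Spoly q2 q3 q4 x0 ≤ 0 := by
  -- basic numeric facts about α
  have hs5 : (2:ℝ) ≤ Real.sqrt 5 := by
    rw [show (2:ℝ) = Real.sqrt 4 by
      rw [show (4:ℝ) = 2^2 by norm_num, Real.sqrt_sq (by norm_num)]]
    exact Real.sqrt_le_sqrt (by norm_num)
  have hα3 : 3 ≤ α := by linarith
  have hα2 : 2*α + 4 ≤ α^2 := by
    nlinarith [Real.sq_sqrt (show (0:ℝ) ≤ 5 by norm_num), Real.sqrt_nonneg 5]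
  have hα32 : 32 ≤ α^3 := aux_cube α hα3 hα2
  intro q2 hq2 q3 hq3 q4 hq4
  obtain ⟨hq2l, hq2r⟩ := hq2
  obtain ⟨hq3l, hq3r⟩ := hq3
  obtain ⟨hq4l, hq4r⟩ := hq4
  have hq2p : 0 < q2 := lt_of_lt_of_le h0 hq2l
  have hq3p : 0 < q3 := lt_of_lt_of_le h0 hq3l
  have hq4p : 0 < q4 := lt_of_lt_of_le h0 hq4l
  set w : ℝ := Real.sqrt (q2^3*q4) with hw_def
  have hwsq : w^2 = q2^3*q4 := Real.sq_sqrt (by positivity)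
  have hwpos : 0 < w := Real.sqrt_pos.mpr (by positivity)
  set c : ℝ := 1/(q3*w) with hc_def
  have hcpos : 0 < c := by positivity
  have hc2 : c^2 = 1/(q2^3*q3^2*q4) := by
    rw [hc_def, div_pow, one_pow, mul_pow, hwsq]; ring_nf
  -- w ≥ α²
  have hwge : α^2 ≤ w := by
    rw [hw_def]
    rw [show α^2 = Real.sqrt ((α^2)^2) by rw [Real.sqrt_sq (by positivity)]]
    apply Real.sqrt_le_sqrt
    calc (α^2)^2 = α^3*α := by ring
      _ ≤ q2^3*q4 := by
        apply mul_le_mul _ hq4l h0.le (by positivity)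
        exact pow_le_pow_left₀ h0.le hq2l 3
  have hcle : c ≤ 1/α^3 := by
    rw [hc_def]
    apply one_div_le_one_div_of_le (by positivity)
    calc α^3 = α*α^2 := by ring
      _ ≤ q3*w := mul_le_mul hq3l hwge (by positivity) hq3p.le
  have hc16 : c < 1/16 := lt_of_le_of_lt hcle (by
    rw [div_lt_div_iff₀ (by positivity) (by norm_num)]; linarith)
  set s : ℝ := Real.sqrt (1 - 16*c) with hs_def
  have hssq : s^2 = 1 - 16*c := Real.sq_sqrt (by linarith)
  have hspos : 0 < s := Real.sqrt_pos.mpr (by linarith)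
  have hslt1 : s < 1 := by
    by_contra h
    push_neg at h
    have h1 : (1:ℝ)*1 ≤ s*s := mul_le_mul h h (by norm_num) (by linarith)
    have h2 : s*s = s^2 := by ring
    rw [h2, hssq] at h1
    linarith
  set x0 : ℝ := 4/(1+s) with hx0_def
  have h1s : (0:ℝ) < 1 + s := by linarith
  have hx0gt2 : 2 < x0 := by
    rw [hx0_def, lt_div_iff₀ h1s]; linarith
  have hx0lt4 : x0 < 4 := by
    rw [hx0_def, div_lt_iff₀ h1s]; linarith
  have hx0pos : 0 < x0 := by linarith
  -- the root property
  have h16c : 16*c = 1 - s^2 := by linarith [hssq]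
  have hx01s : x0 * (1+s) = 4 := by rw [hx0_def]; field_simp
  have hroot : 1 - x0/2 + c*x0^2 = 0 := by
    linear_combination (x0^2/16) * h16c + (-(4 - x0 + x0*s)/16) * hx01s
  -- key identity
  have key : Spoly q2 q3 q4 x0
      = (1 - x0/2 + c*x0^2)^2 + (1/q2 - 1/4 - 2*c)*x0^2 + (c - 1/(q2^2*q3))*x0^3 := by
    unfold Spoly
    rw [show x0^4/(q2^3*q3^2*q4) = c^2*x0^4 by rw [hc2]; ring]
    ring
  -- main estimate
  have hE : (1/q2 - 1/4 - 2*c) + (c - 1/(q2^2*q3))*x0 ≤ 0 := by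
    rcases le_or_gt (c - 1/(q2^2*q3)) 0 with hB | hB
    · -- B ≤ 0 : use x0 ≥ 2
      have h1 : (c - 1/(q2^2*q3))*x0 ≤ (c - 1/(q2^2*q3))*2 :=
        mul_le_mul_of_nonpos_left hx0gt2.le hB
      have h8 : q2*q3*(4-q2) ≤ 8 := by
        rcases le_or_gt 4 q2 with h4 | h4
        · exact aux_h8' q2 q3 h4 hq3p
        · have hα4 : α < 4 := lt_of_le_of_lt hq2l h4
          have hβ' : β ≤ 8/(α*(4-α)) := hβ.resolve_left (by linarith)
          have hpos : 0 < α*(4-α) := mul_pos h0 (by linarith)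
          have hb8 : α*β*(4-α) ≤ 8 := by
            rw [le_div_iff₀ hpos] at hβ'
            have : β*(α*(4-α)) = α*β*(4-α) := by ring
            linarith
          exact aux_h8 α β q2 q3 hα3 hq2l hq3l hq3r hb8 h4
      have h2 : 1/q2 - 1/4 - 2/(q2^2*q3) ≤ 0 := by
        have heq : 1/q2 - 1/4 - 2/(q2^2*q3) = (q2*q3*(4-q2) - 8)/(4*q2^2*q3) := by
          field_simp; ring
        rw [heq]
        exact div_nonpos_of_nonpos_of_nonneg (by linarith) (by positivity)
      have h3 : (c - 1/(q2^2*q3)) * 2 = 2*c - 2/(q2^2*q3) := by ring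
      rw [h3] at h1
      linarith
    · -- B > 0 : use x0 ≤ 4
      have h1 : (c - 1/(q2^2*q3))*x0 ≤ (c - 1/(q2^2*q3))*4 :=
        mul_le_mul_of_nonneg_left hx0lt4.le hB.le
      have hgoal : 1/q2 - 1/4 + 2*c - 4/(q2^2*q3) ≤ 0 := by
        rcases le_or_gt q2 4 with h4 | h4
        · -- q2 ≤ 4; work with u = √q2, v = √α
          set u : ℝ := Real.sqrt q2 with hu_def
          set v : ℝ := Real.sqrt α with hv_def
          have husq : u^2 = q2 := Real.sq_sqrt hq2p.le
          have hvsq : v^2 = α := Real.sq_sqrt h0.le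
          have hvpos : 0 < v := Real.sqrt_pos.mpr h0
          have hupos : 0 < u := Real.sqrt_pos.mpr hq2p
          have huv : v ≤ u := Real.sqrt_le_sqrt hq2l
          have hwge2 : u^3*v ≤ w := by
            rw [hw_def]
            rw [show u^3*v = Real.sqrt ((u^3*v)^2) by rw [Real.sqrt_sq (by positivity)]]
            apply Real.sqrt_le_sqrt
            have e1 : (u^3*v)^2 = q2^3*α := by
              rw [show (u^3*v)^2 = (u^2)^3*v^2 by ring, husq, hvsq]
            rw [e1]
            exact mul_le_mul_of_nonneg_left hq4l (by positivity)
          have hcle2 : c ≤ 1/(q3*(u^3*v)) := by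
            rw [hc_def]
            apply one_div_le_one_div_of_le (by positivity)
            exact mul_le_mul_of_nonneg_left hwge2 hq3p.le
          have hα4 : α ≤ 4 := le_trans hq2l h4
          have hβcase : α*β*(4-α) ≤ 8 := by
            rcases hβ with h | hβ'
            · have he : α = 4 := le_antisymm hα4 h
              rw [he]; norm_num
            · have hpos : 0 < α*(4-α) := by
                rcases eq_or_lt_of_le hα4 with he | hl
                · exfalso
                  rw [← he] at hβ'
                  norm_num at hβ'
                  linarith
                · exact mul_pos h0 (by linarith)
              rw [le_div_iff₀ hpos] at hβ'
              have : β*(α*(4-α)) = α*β*(4-α) := by ring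
              linarith
          have hb8 : v^2*β*(4-v^2) ≤ 8 := by rw [hvsq]; linarith
          have hmain : q3*(v*(u^2*(4-u^2))) + 8*u ≤ 16*v :=
            aux_main β q3 u v hvpos huv (by rw [husq]; linarith)
              (by rw [hvsq]; linarith) (by rw [hvsq]; linarith) hq3r hb8
          have hfinal : 1/q2 - 1/4 + 2/(q3*(u^3*v)) - 4/(q2^2*q3) ≤ 0 := by
            have heq : 1/q2 - 1/4 + 2/(q3*(u^3*v)) - 4/(q2^2*q3)
                = (q3*(v*(u^2*(4-u^2))) + 8*u - 16*v)/(4*u^4*q3*v) := by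
              rw [← husq]; field_simp; ring
            rw [heq]
            exact div_nonpos_of_nonpos_of_nonneg (by linarith) (by positivity)
          have h2c2 : 2*c ≤ 2/(q3*(u^3*v)) := by
            rw [show (2:ℝ)/(q3*(u^3*v)) = 2*(1/(q3*(u^3*v))) by ring]
            linarith
          linarith
        · -- q2 > 4
          rcases le_or_gt q2 (4*q4) with hq44 | hq44
          · have hw2 : q2^2/2 ≤ w := by
              rw [hw_def]
              rw [show q2^2/2 = Real.sqrt ((q2^2/2)^2) by rw [Real.sqrt_sq (by positivity)]]
              exact Real.sqrt_le_sqrt (aux_w2 q2 q4 hq2p hq44)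
            have h2c : 2*c ≤ 4/(q2^2*q3) := by
              rw [hc_def, show (2:ℝ)*(1/(q3*w)) = 2/(q3*w) by ring,
                div_le_div_iff₀ (by positivity) (by positivity)]
              have : q2^2*q3 ≤ 2*w*q3 := mul_le_mul_of_nonneg_right (by linarith) hq3p.le
              linarith
            have hq24 : 1/q2 ≤ 1/4 := one_div_le_one_div_of_le (by norm_num) h4.le
            linarith
          · have h4α : 4*α ≤ q2 := by linarith
            have h1q2 : 1/q2 ≤ 1/(4*α) :=
              one_div_le_one_div_of_le (by positivity) h4α
            have h2c : 2*c ≤ 2/α^3 := by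
              rw [show (2:ℝ)/α^3 = 2*(1/α^3) by ring]; linarith
            have hn1 : 1/(4*α) ≤ 1/12 :=
              one_div_le_one_div_of_le (by norm_num) (by linarith)
            have hn2 : 2/α^3 ≤ 2/32 := by
              rw [div_le_div_iff₀ (by positivity) (by norm_num)]; linarith
            have hn3 : 0 < 4/(q2^2*q3) := by positivity
            linarith
      have h3 : (c - 1/(q2^2*q3)) * 4 = 4*c - 4/(q2^2*q3) := by ring
      rw [h3] at h1
      linarith
  refine ⟨x0, ⟨by linarith, ?_⟩, ?_⟩
  · -- x0 < α
    rcases le_or_gt 4 α with h4 | h4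
    · linarith
    · have hkey := aux_xlt α h0 hα2
      have hsgt : (4-α)/α < s := by
        rw [hs_def]
        rw [show (4-α)/α = Real.sqrt (((4-α)/α)^2) by
          rw [Real.sqrt_sq (div_nonneg (by linarith) h0.le)]]
        apply Real.sqrt_lt_sqrt (by positivity)
        have h16 : 16*c ≤ 16/α^3 := by
          rw [show (16:ℝ)/α^3 = 16*(1/α^3) by ring]; linarith
        have heq : 1 - 16/α^3 - ((4-α)/α)^2 = (α^3 - 16 - α*(4-α)^2)/α^3 := by
          field_simp
        have hpos2 : 0 < (α^3 - 16 - α*(4-α)^2)/α^3 :=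
          div_pos (by linarith) (by positivity)
        linarith
      have hαs : α*((4-α)/α) = 4 - α := by field_simp
      have : α*((4-α)/α) < α*s := mul_lt_mul_of_pos_left hsgt h0
      rw [hx0_def, div_lt_iff₀ h1s]
      linarith
  · rw [key, hroot]
    have heq2 : (0:ℝ)^2 + (1/q2 - 1/4 - 2*c)*x0^2 + (c - 1/(q2^2*q3))*x0^3
        = x0^2 * ((1/q2 - 1/4 - 2*c) + (c - 1/(q2^2*q3))*x0) := by ring
    rw [heq2]
    exact mul_nonpos_of_nonneg_of_nonpos (sq_nonneg x0) hE
end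

section
/- Let 0 < α < β be real numbers, and suppose that for all q₂, q₃, q₄ ∈ [α, β] there exists a point x₀ ∈ (1, α) such that S_{q₂,q₃,q₄}(x₀) ≤ 0. Then α ≥ 1 + √5, and if moreover α < 4 then β ≤ 8/(α(4 − α)). -/
set_option maxHeartbeats 1000000 in
/-- If `0 < α < β` and for all `q₂, q₃, q₄ ∈ [α, β]` there is `x₀ ∈ (1, α)` with
`S_{q₂,q₃,q₄}(x₀) ≤ 0`, then `α ≥ 1 + √5` and, if `α < 4`, then `β ≤ 8/(α(4-α))`. -/
theorem hutchinson_lemma_necessity (α β : ℝ) (h0 : 0 < α) (hαβ : α < β)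
    (h : ∀ q2 ∈ Set.Icc α β, ∀ q3 ∈ Set.Icc α β, ∀ q4 ∈ Set.Icc α β,
      ∃ x0 ∈ Set.Ioo (1 : ℝ) α, Spoly q2 q3 q4 x0 ≤ 0) :
    1 + Real.sqrt 5 ≤ α ∧ (α < 4 → β ≤ 8 / (α * (4 - α))) := by
  have hαmem : α ∈ Set.Icc α β := ⟨le_refl α, hαβ.le⟩
  have hβmem : β ∈ Set.Icc α β := ⟨hαβ.le, le_refl β⟩
  -- Part 1
  obtain ⟨x, ⟨hx1, hx2⟩, hS⟩ := h α hαmem α hαmem α hαmem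
  have hα1 : (1:ℝ) < α := hx1.trans hx2
  have key1 : 1 + Real.sqrt 5 ≤ α := by
    by_contra hc
    push_neg at hc
    have h5 : α ^ 2 < 2 * α + 4 := by
      have hs : Real.sqrt 5 ^ 2 = 5 := Real.sq_sqrt (by norm_num)
      nlinarith [Real.sqrt_nonneg 5, hs, hα1]
    have hα6 : (0:ℝ) < α ^ 6 := by positivity
    have hS' : α ^ 6 - α ^ 6 * x + α ^ 5 * x ^ 2 - α ^ 3 * x ^ 3 + x ^ 4 ≤ 0 := by
      have hid : Spoly α α α x =
          (α ^ 6 - α ^ 6 * x + α ^ 5 * x ^ 2 - α ^ 3 * x ^ 3 + x ^ 4) / α ^ 6 := by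
        unfold Spoly
        field_simp
      rw [hid] at hS
      rcases div_nonpos_iff.mp hS with ⟨_, hden⟩ | ⟨hnum, _⟩
      · linarith
      · exact hnum
    have hx0 : (0:ℝ) < x := lt_trans one_pos hx1
    rcases le_or_gt α 2 with h2 | h2
    · -- 1 < α ≤ 2
      have hA : (x ^ 2 - α ^ 3 * x / 2 + α ^ 3) ^ 2 ≥ x ^ 4 + α ^ 3 * (2 - x) * x ^ 2 := by
        nlinarith [sq_nonneg (α ^ 3 * (2 - x))]
      have hD : x ^ 4 + α ^ 3 * (2 - x) * x ^ 2 + (α ^ 5 - α ^ 6 / 4 - 2 * α ^ 3) * x ^ 2 ≤ 0 := by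
        nlinarith [hA, hS']
      have hE : x ^ 2 + α ^ 3 * (2 - x) + (α ^ 5 - α ^ 6 / 4 - 2 * α ^ 3) ≤ 0 := by
        by_contra hE'
        push_neg at hE'
        nlinarith [mul_pos hE' (mul_pos hx0 hx0), hD]
      have hq : (0:ℝ) ≤ 2 - α := by linarith
      nlinarith [hE, mul_pos (pow_pos h0 3) (sub_pos.mpr hx2),
        mul_nonneg (mul_nonneg (pow_pos h0 3).le hq) (sq_nonneg (α - 1)),
        mul_nonneg (sq_nonneg (α - 1)) (sq_nonneg α),
        mul_nonneg hq (by positivity : (0:ℝ) ≤ 2 + α),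
        sq_nonneg (α - 1), sq_nonneg (x - 1)]
    · -- α > 2
      have hpos : (0:ℝ) < (α ^ 5 - α ^ 6 / 4 - 2 * α ^ 3) * x ^ 2 := by
        have : (0:ℝ) < α ^ 5 - α ^ 6 / 4 - 2 * α ^ 3 := by
          nlinarith [mul_pos (sub_pos.mpr h2) (sub_pos.mpr h5), pow_pos h0 3]
        exact mul_pos this (by positivity)
      nlinarith [sq_nonneg (x ^ 2 - α ^ 3 * x / 2 + α ^ 3), hpos]
  refine ⟨key1, fun hα4 => ?_⟩
  -- Part 2
  by_contra hc
  push_neg at hc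
  have hd : (0:ℝ) < α * (4 - α) := mul_pos h0 (by linarith)
  have hb8 : 8 < β * (α * (4 - α)) := by
    have := (div_lt_iff₀ hd).mp hc
    linarith
  obtain ⟨y, ⟨hy1, hy2⟩, hT⟩ := h α hαmem β hβmem α hαmem
  have hβ0 : (0:ℝ) < β := h0.trans hαβ
  have hy0 : (0:ℝ) < y := lt_trans one_pos hy1
  have hid : Spoly α β α y =
      (y ^ 2 / (α ^ 2 * β) - y / 2 + 1) ^ 2 + (1 / α - 1 / 4 - 2 / (α ^ 2 * β)) * y ^ 2 := by
    unfold Spoly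
    field_simp
    ring
  have hcoef : (0:ℝ) < 1 / α - 1 / 4 - 2 / (α ^ 2 * β) := by
    have hrw : 1 / α - 1 / 4 - 2 / (α ^ 2 * β) =
        (4 * α * β - α ^ 2 * β - 8) / (4 * (α ^ 2 * β)) := by
      field_simp
      ring
    rw [hrw]
    apply div_pos _ (by positivity)
    linarith [hb8]
  have hcy : (0:ℝ) < (1 / α - 1 / 4 - 2 / (α ^ 2 * β)) * y ^ 2 :=
    mul_pos hcoef (pow_pos hy0 2)
  rw [hid] at hT
  have hsq := sq_nonneg (y ^ 2 / (α ^ 2 * β) - y / 2 + 1)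
  linarith
end

section
/- If 0 < α < 1 + √5, then S_{α,α,α}(x) = 1 − x + x²/α − x³/α³ + x⁴/α⁶ > 0 for every real x. In particular, for such α there is no x₀ ∈ (1, α) with S_{α,α,α}(x₀) ≤ 0. -/
lemma key_sqrt (s x : ℝ) (hs : 0 < s) (hb : s^6 < 2*s^4 + 4*s^2) :
    0 < x^4 - s^6*x^3 + s^10*x^2 - s^12*x + s^12 := by
  rcases eq_or_ne x 0 with rfl | hx
  · simpa using pow_pos hs 12
  have hx2 : 0 < x^2 := by positivity
  rcases le_or_gt (s^6) 12 with hc | hc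
  · -- small α: cert 2
    rcases lt_or_ge x 0 with hxneg | hxpos
    · nlinarith [mul_pos (mul_pos (pow_pos hs 6) (neg_pos.2 hxneg)) (by positivity : (0:ℝ) < x^2 + s^6),
        pow_pos hs 12, mul_nonneg (pow_pos hs 10).le (sq_nonneg x)]
    · have hx0 : 0 < x := lt_of_le_of_ne hxpos (Ne.symm hx)
      have h4 : s^3 ≤ 4 := by nlinarith [pow_pos hs 3]
      have hmin : (5:ℝ)/16 ≤ s^4 - 2*s^3 + 2 := by
        nlinarith [mul_nonneg (sq_nonneg (2*s-3)) (by positivity : (0:ℝ) ≤ 4*s^2+4*s+3)]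
      nlinarith [sq_nonneg ((x - s^3)^2),
        mul_nonneg (mul_nonneg (mul_nonneg (pow_pos hs 3).le (by linarith : (0:ℝ) ≤ 4 - s^3)) hx0.le) (sq_nonneg (x - s^3)),
        mul_pos (mul_pos (pow_pos hs 6) hx2) (by linarith : (0:ℝ) < s^4 - 2*s^3 + 2)]
  · -- large α: cert 1
    have hc' : s^6 < 4*s^4 - 8 := by
      nlinarith [pow_pos hs 2, pow_pos hs 4, mul_pos (pow_pos hs 2) (pow_pos hs 2)]
    nlinarith [sq_nonneg (2*x^2 - s^6*x + 2*s^6),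
      mul_pos (mul_pos (pow_pos hs 6) hx2) (by linarith : (0:ℝ) < 4*s^4 - 8 - s^6)]

lemma key_poly (α x : ℝ) (h0 : 0 < α) (h1 : α < 1 + Real.sqrt 5) :
    0 < x^4 - α^3*x^3 + α^5*x^2 - α^6*x + α^6 := by
  set s := Real.sqrt α with hs_def
  have hs : 0 < s := Real.sqrt_pos.2 h0
  have hs2 : s^2 = α := Real.sq_sqrt h0.le
  have hq : α^2 < 2*α + 4 := by
    have hr2 : Real.sqrt 5 ^ 2 = 5 := Real.sq_sqrt (by norm_num)
    have hr1 : 1 ≤ Real.sqrt 5 := by nlinarith [Real.sqrt_nonneg 5]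
    nlinarith [mul_pos (show (0:ℝ) < 1 + Real.sqrt 5 - α by linarith)
      (show (0:ℝ) < Real.sqrt 5 + α - 1 by linarith)]
  have hb : s^6 < 2*s^4 + 4*s^2 := by
    have e1 : s^6 = α^2 * α := by rw [← hs2]; ring
    have e2 : s^4 = α * α := by rw [← hs2]; ring
    rw [e1, e2, hs2]; nlinarith
  have := key_sqrt s x hs hb
  have e3 : s^6 = α^3 := by rw [← hs2]; ring
  have e5 : s^10 = α^5 := by rw [← hs2]; ring
  have e6 : s^12 = α^6 := by rw [← hs2]; ring
  rw [e3, e5, e6] at this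
  exact this

/-- If `0 < α < 1 + √5`, then `S_{α,α,α}(x) = 1 - x + x²/α - x³/α³ + x⁴/α⁶ > 0` for
every real `x`; in particular there is no `x₀ ∈ (1, α)` with `S_{α,α,α}(x₀) ≤ 0`. -/
theorem Salpha_positive (α : ℝ) (h0 : 0 < α) (h1 : α < 1 + Real.sqrt 5) :
    (∀ x : ℝ, 0 < 1 - x + x ^ 2 / α - x ^ 3 / α ^ 3 + x ^ 4 / α ^ 6) ∧
    ¬ ∃ x0 ∈ Set.Ioo (1 : ℝ) α, Spoly α α α x0 ≤ 0 := by
  have hmain : ∀ x : ℝ, 0 < 1 - x + x ^ 2 / α - x ^ 3 / α ^ 3 + x ^ 4 / α ^ 6 := by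
    intro x
    have hP := key_poly α x h0 h1
    have hα6 : (0:ℝ) < α^6 := by positivity
    have heq : 1 - x + x ^ 2 / α - x ^ 3 / α ^ 3 + x ^ 4 / α ^ 6
        = (x^4 - α^3*x^3 + α^5*x^2 - α^6*x + α^6) / α^6 := by
      field_simp
      ring
    rw [heq]
    exact div_pos hP hα6
  refine ⟨hmain, ?_⟩
  rintro ⟨x0, _, hle⟩
  have heqS : Spoly α α α x0 = 1 - x0 + x0 ^ 2 / α - x0 ^ 3 / α ^ 3 + x0 ^ 4 / α ^ 6 := by
    unfold Spoly
    ring_nf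
  have := hmain x0
  rw [heqS] at hle
  linarith
end

section
/- Let α ≥ 1 + √5, β > α, and q₂ ≥ α. Then for every x ∈ (1, α), the inequality 3x² − 2 q₂ α β x + q₂² α β² > 0 holds. -/
/-- For `α ≥ 1 + √5`, `β > α`, `q₂ ≥ α` and `x ∈ (1, α)`, the inequality
`3x² - 2 q₂ α β x + q₂² α β² > 0` holds. -/
theorem quadratic_positive (α β q2 : ℝ) (hα : 1 + Real.sqrt 5 ≤ α) (hβ : α < β)
    (hq2 : α ≤ q2) :
    ∀ x ∈ Set.Ioo (1 : ℝ) α,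
      0 < 3 * x ^ 2 - 2 * q2 * α * β * x + q2 ^ 2 * α * β ^ 2 := by
  intro x hx
  obtain ⟨hx1, hx2⟩ := hx
  have h5 : (2:ℝ) ≤ Real.sqrt 5 := by
    nlinarith [Real.sq_sqrt (by norm_num : (0:ℝ) ≤ 5), Real.sqrt_nonneg 5]
  have hα3 : (3:ℝ) ≤ α := by linarith
  have hx0 : (0:ℝ) < x := by linarith
  have hqb : 2 * x < q2 * β := by nlinarith
  have hq0 : (0:ℝ) < q2 := by linarith
  have hb0 : (0:ℝ) < β := by linarith
  have hpos : 0 < q2 * α * β := by positivity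
  nlinarith [mul_pos hpos (sub_pos.mpr hqb)]
end

section
/- Let α ≥ 1 + √5, β > α, and α ≤ q₂ ≤ q₂′. Then for every x ∈ (1, α), S_{q₂′,β,α}(x) ≤ S_{q₂,β,α}(x); in particular S_{q₂,β,α}(x) ≤ S_{α,β,α}(x) for every q₂ ∈ [α, β] and x ∈ (1, α). -/
lemma Spoly_key (α β q2 q2' x : ℝ) (hα : 3 ≤ α) (hβ : α < β) (h1 : α ≤ q2) (h2 : q2 ≤ q2')
    (hx1 : 1 < x) (hx2 : x < α) : Spoly q2' β α x ≤ Spoly q2 β α x := by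
  have hα0 : (0:ℝ) < α := by linarith
  have hβ0 : (0:ℝ) < β := by linarith
  have hq2 : (0:ℝ) < q2 := by linarith
  have hq2' : (0:ℝ) < q2' := by linarith
  have hx0 : (0:ℝ) < x := by linarith
  rw [← sub_nonneg]
  have h : Spoly q2 β α x - Spoly q2' β α x =
      (q2' - q2) * (α * β^2 * x^2 * q2^2 * q2'^2 - α * β * x^3 * (q2 + q2') * q2 * q2'
        + x^4 * (q2^2 + q2*q2' + q2'^2)) / (q2^3 * q2'^3 * β^2 * α) := by
    unfold Spoly
    field_simp
    ring
  rw [h]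
  apply div_nonneg _ (by positivity)
  apply mul_nonneg (by linarith)
  have key1 : x * (q2 + q2') ≤ β * q2 * q2' := by
    nlinarith [mul_lt_mul_of_pos_right hx2 hq2, mul_lt_mul_of_pos_right hx2 hq2',
      mul_le_mul_of_nonneg_right h1 (le_of_lt hq2'), mul_le_mul_of_nonneg_left h2 (le_of_lt hα0),
      mul_pos hq2 hq2']
  have hc : (0:ℝ) < α * β * x^2 * q2 * q2' := by positivity
  nlinarith [mul_le_mul_of_nonneg_left key1 (le_of_lt hc), pow_pos hx0 4,
    mul_pos hq2 hq2', sq_nonneg (q2 + q2')]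

/-- For `α ≥ 1 + √5` and `β > α`, on `(1, α)` the function `S_{q₂,β,α}` is nonincreasing
in `q₂` (for `q₂ ≥ α`); in particular `S_{q₂,β,α}(x) ≤ S_{α,β,α}(x)` for every
`q₂ ∈ [α, β]` and `x ∈ (1, α)`. -/
theorem Spoly_antitone_q2 (α β : ℝ) (hα : 1 + Real.sqrt 5 ≤ α) (hβ : α < β) :
    (∀ q2 q2' : ℝ, α ≤ q2 → q2 ≤ q2' → ∀ x ∈ Set.Ioo (1 : ℝ) α,
      Spoly q2' β α x ≤ Spoly q2 β α x) ∧
    (∀ q2 ∈ Set.Icc α β, ∀ x ∈ Set.Ioo (1 : ℝ) α,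
      Spoly q2 β α x ≤ Spoly α β α x) := by
  have h5 : (2:ℝ) ≤ Real.sqrt 5 := by
    rw [show (2:ℝ) = Real.sqrt 4 by rw [show (4:ℝ) = 2^2 by norm_num, Real.sqrt_sq (by norm_num)]]
    exact Real.sqrt_le_sqrt (by norm_num)
  have hα3 : 3 ≤ α := by linarith
  constructor
  · intro q2 q2' h1 h2 x hx
    exact Spoly_key α β q2 q2' x hα3 hβ h1 h2 hx.1 hx.2
  · intro q2 hq x hx
    exact Spoly_key α β α q2 x hα3 hβ le_rfl hq.1 hx.1 hx.2
end

section
/- Let α ≥ 1 + √5 and β > α. Then for all q₂, q₃, q₄ ∈ [α, β] and every x ∈ (1, α), S_{q₂,q₃,q₄}(x) ≤ S_{α,β,α}(x). Consequently, there exists x₀ ∈ (1, α) with S_{q₂,q₃,q₄}(x₀) ≤ 0 for every choice of q₂, q₃, q₄ ∈ [α, β] if and only if there exists x₀ ∈ (1, α) with S_{α,β,α}(x₀) ≤ 0. -/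
/-- Step 1: decreasing `q4` to `α` increases `S`. -/
lemma Spoly_step_q4 (α β q2 q3 q4 x : ℝ) (h3 : (3:ℝ) < α)
    (hq2 : α ≤ q2) (hq3 : α ≤ q3) (hq4 : α ≤ q4) (hx0 : 0 < x) :
    Spoly q2 q3 q4 x ≤ Spoly q2 q3 α x := by
  have hα0 : (0:ℝ) < α := by linarith
  have hq20 : (0:ℝ) < q2 := by linarith
  have hq30 : (0:ℝ) < q3 := by linarith
  unfold Spoly
  gcongr

/-- Step 2: increasing `q3` to `β` increases `S`. -/
lemma Spoly_step_q3 (α β q2 q3 x : ℝ) (h3 : (3:ℝ) < α) (hβ : α < β)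
    (hq2 : α ≤ q2) (hq3 : α ≤ q3) (hq3' : q3 ≤ β)
    (hx1 : 1 < x) (hxα : x < α) :
    Spoly q2 q3 α x ≤ Spoly q2 β α x := by
  have hα0 : (0:ℝ) < α := by linarith
  have hx0 : (0:ℝ) < x := by linarith
  have hq20 : (0:ℝ) < q2 := by linarith
  have hq30 : (0:ℝ) < q3 := by linarith
  have hβ0 : (0:ℝ) < β := by linarith
  unfold Spoly
  rw [← sub_nonneg]
  have key : (1 - x + x ^ 2 / q2 - x ^ 3 / (q2 ^ 2 * β) + x ^ 4 / (q2 ^ 3 * β ^ 2 * α))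
      - (1 - x + x ^ 2 / q2 - x ^ 3 / (q2 ^ 2 * q3) + x ^ 4 / (q2 ^ 3 * q3 ^ 2 * α))
      = (x ^ 3 * (β - q3)) / (q2 ^ 2 * q3 * β)
        * (1 - x * (β + q3) / (q2 * q3 * β * α)) := by
    field_simp
    ring
  rw [key]
  have h1 : 0 ≤ (x ^ 3 * (β - q3)) / (q2 ^ 2 * q3 * β) := by
    apply div_nonneg (mul_nonneg (by positivity) (by linarith)) (by positivity)
  have h2 : x * (β + q3) / (q2 * q3 * β * α) ≤ 1 := by
    rw [div_le_one (by positivity)]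
    have f4 : 2 ≤ q2 * q3 := by nlinarith
    have f1 : x * (β + q3) ≤ α * (β + q3) :=
      mul_le_mul_of_nonneg_right hxα.le (by linarith)
    have f3 : 2 * (α * β) ≤ (q2 * q3) * (α * β) :=
      mul_le_mul_of_nonneg_right f4 (by positivity)
    nlinarith [f1, f3]
  nlinarith [h1, h2]

/-- Step 3: decreasing `q2` to `α` increases `S`. -/
lemma Spoly_step_q2 (α β q2 x : ℝ) (h3 : (3:ℝ) < α) (hβ : α < β)
    (hq2 : α ≤ q2) (hx1 : 1 < x) (hxα : x < α) :
    Spoly q2 β α x ≤ Spoly α β α x := by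
  have hα0 : (0:ℝ) < α := by linarith
  have hx0 : (0:ℝ) < x := by linarith
  have hq20 : (0:ℝ) < q2 := by linarith
  have hβ0 : (0:ℝ) < β := by linarith
  unfold Spoly
  rw [← sub_nonneg]
  have key : (1 - x + x ^ 2 / α - x ^ 3 / (α ^ 2 * β) + x ^ 4 / (α ^ 3 * β ^ 2 * α))
      - (1 - x + x ^ 2 / q2 - x ^ 3 / (q2 ^ 2 * β) + x ^ 4 / (q2 ^ 3 * β ^ 2 * α))
      = ((q2 - α) * x ^ 2 / (α * q2)) * (1 - x * (q2 + α) / (β * α * q2))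
        + (q2 - α) * x ^ 4 * (q2 ^ 2 + α * q2 + α ^ 2) / (β ^ 2 * α ^ 4 * q2 ^ 3) := by
    field_simp
    ring
  rw [key]
  have hA : 0 ≤ (q2 - α) * x ^ 2 / (α * q2) := by
    apply div_nonneg (mul_nonneg (by linarith) (by positivity)) (by positivity)
  have hB : 0 ≤ 1 - x * (q2 + α) / (β * α * q2) := by
    rw [sub_nonneg, div_le_one (by positivity)]
    have f1 : x * (q2 + α) ≤ α * (q2 + α) :=
      mul_le_mul_of_nonneg_right hxα.le (by linarith)
    have f2 : α * (q2 + α) ≤ α * (2 * q2) := by nlinarith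
    nlinarith [mul_pos hα0 hq20]
  have hC : 0 ≤ (q2 - α) * x ^ 4 * (q2 ^ 2 + α * q2 + α ^ 2) / (β ^ 2 * α ^ 4 * q2 ^ 3) := by
    apply div_nonneg (mul_nonneg (mul_nonneg (by linarith) (by positivity)) (by positivity))
      (by positivity)
  nlinarith [mul_nonneg hA hB]

/-- For `α ≥ 1 + √5` and `β > α`: `S_{q₂,q₃,q₄}(x) ≤ S_{α,β,α}(x)` for all
`q₂, q₃, q₄ ∈ [α, β]` and `x ∈ (1, α)`; consequently, every `S_{q₂,q₃,q₄}` with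
parameters from `[α, β]` takes a nonpositive value on `(1, α)` iff `S_{α,β,α}` does. -/
theorem Spoly_reduction (α β : ℝ) (hα : 1 + Real.sqrt 5 ≤ α) (hβ : α < β) :
    (∀ q2 ∈ Set.Icc α β, ∀ q3 ∈ Set.Icc α β, ∀ q4 ∈ Set.Icc α β,
      ∀ x ∈ Set.Ioo (1 : ℝ) α, Spoly q2 q3 q4 x ≤ Spoly α β α x) ∧
    ((∀ q2 ∈ Set.Icc α β, ∀ q3 ∈ Set.Icc α β, ∀ q4 ∈ Set.Icc α β,
      ∃ x0 ∈ Set.Ioo (1 : ℝ) α, Spoly q2 q3 q4 x0 ≤ 0) ↔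
      ∃ x0 ∈ Set.Ioo (1 : ℝ) α, Spoly α β α x0 ≤ 0) := by
  have hs5 : (2:ℝ) < Real.sqrt 5 := by
    nlinarith [Real.sq_sqrt (by norm_num : (5:ℝ) ≥ 0), Real.sqrt_nonneg 5]
  have h3 : (3:ℝ) < α := by linarith
  have hmain : ∀ q2 ∈ Set.Icc α β, ∀ q3 ∈ Set.Icc α β, ∀ q4 ∈ Set.Icc α β,
      ∀ x ∈ Set.Ioo (1 : ℝ) α, Spoly q2 q3 q4 x ≤ Spoly α β α x := by
    rintro q2 ⟨hq2, hq2'⟩ q3 ⟨hq3, hq3'⟩ q4 ⟨hq4, hq4'⟩ x ⟨hx1, hxα⟩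
    calc Spoly q2 q3 q4 x ≤ Spoly q2 q3 α x :=
          Spoly_step_q4 α β q2 q3 q4 x h3 hq2 hq3 hq4 (by linarith)
      _ ≤ Spoly q2 β α x := Spoly_step_q3 α β q2 q3 x h3 hβ hq2 hq3 hq3' hx1 hxα
      _ ≤ Spoly α β α x := Spoly_step_q2 α β q2 x h3 hβ hq2 hx1 hxα
  refine ⟨hmain, ?_, ?_⟩
  · intro h
    have hαm : α ∈ Set.Icc α β := ⟨le_refl α, hβ.le⟩
    have hβm : β ∈ Set.Icc α β := ⟨hβ.le, le_refl β⟩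
    exact h α hαm β hβm α hαm
  · rintro ⟨x0, hx0, hS⟩ q2 hq2 q3 hq3 q4 hq4
    exact ⟨x0, hx0, le_trans (hmain q2 hq2 q3 hq3 q4 hq4 x0 hx0) hS⟩
end

section
/- Let α ≥ 1 + √5 and β > α. Then there exists a point x₀ ∈ (1, α) such that S_{α,β,α}(x₀) ≤ 0 if and only if α²β − 4αβ + 8 ≥ 0, i.e., if and only if either α ≥ 4 or β ≤ 8/(α(4 − α)). Equivalently, the quadratic w² − α√β·w + αβ − 2 attains a nonpositive value at some point of the interval (√β + 1/√β, α√β + 1/(α√β)) if and only if α²β − 4αβ + 8 ≥ 0. -/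
set_option maxHeartbeats 1000000

/-- For `α ≥ 1 + √5` and `β > α`: there is `x₀ ∈ (1, α)` with `S_{α,β,α}(x₀) ≤ 0` iff
`α²β - 4αβ + 8 ≥ 0`, i.e. iff `α ≥ 4` or `β ≤ 8/(α(4-α))`; equivalently, the quadratic
`w² - α√β·w + αβ - 2` takes a nonpositive value on `(√β + 1/√β, α√β + 1/(α√β))` iff
`α²β - 4αβ + 8 ≥ 0`. -/
theorem Salphabeta_nonpositive_iff (α β : ℝ) (hα : 1 + Real.sqrt 5 ≤ α) (hβ : α < β) :
    ((∃ x0 ∈ Set.Ioo (1 : ℝ) α, Spoly α β α x0 ≤ 0) ↔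
      0 ≤ α ^ 2 * β - 4 * α * β + 8) ∧
    (0 ≤ α ^ 2 * β - 4 * α * β + 8 ↔ (4 ≤ α ∨ β ≤ 8 / (α * (4 - α)))) ∧
    ((∃ w ∈ Set.Ioo (Real.sqrt β + 1 / Real.sqrt β)
        (α * Real.sqrt β + 1 / (α * Real.sqrt β)),
        w ^ 2 - α * Real.sqrt β * w + α * β - 2 ≤ 0) ↔
      0 ≤ α ^ 2 * β - 4 * α * β + 8) := by
  have h5 : Real.sqrt 5 ^ 2 = 5 := Real.sq_sqrt (by norm_num)
  have h5n : (0:ℝ) ≤ Real.sqrt 5 := Real.sqrt_nonneg 5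
  have hα3 : (3:ℝ) < α := by nlinarith
  have hβ3 : (3:ℝ) < β := by linarith
  have hα0 : (0:ℝ) < α := by linarith
  have hβ0 : (0:ℝ) < β := by linarith
  have hkey : (2:ℝ) < (α - 2) * β := by nlinarith
  set s := Real.sqrt β with hsdef
  have hs2 : s ^ 2 = β := Real.sq_sqrt hβ0.le
  have hs0 : (0:ℝ) < s := Real.sqrt_pos.mpr hβ0
  have hs1 : (1:ℝ) < s := by nlinarith
  have hαβ16 : (16:ℝ) < α ^ 2 * β := by nlinarith
  refine ⟨?_, ?_, ?_⟩
  · -- Part A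
    constructor
    · rintro ⟨x, ⟨hx1, hxα⟩, hS⟩
      have hT : α ^ 4 * β ^ 2 * Spoly α β α x =
          x ^ 4 - α ^ 2 * β * x ^ 3 + α ^ 3 * β ^ 2 * x ^ 2
            - α ^ 4 * β ^ 2 * x + α ^ 4 * β ^ 2 := by
        unfold Spoly; field_simp; ring
      have hTle : x ^ 4 - α ^ 2 * β * x ^ 3 + α ^ 3 * β ^ 2 * x ^ 2
            - α ^ 4 * β ^ 2 * x + α ^ 4 * β ^ 2 ≤ 0 := by
        rw [← hT]
        exact mul_nonpos_of_nonneg_of_nonpos (by positivity) hS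
      nlinarith [sq_nonneg (α ^ 2 * β * x - 2 * x ^ 2 - 2 * α ^ 2 * β),
        mul_pos (mul_pos (by nlinarith : (0:ℝ) < x ^ 2) (by positivity : (0:ℝ) < α ^ 2)) hβ0]
    · intro hΔ
      set r := Real.sqrt (α ^ 2 * β * (α ^ 2 * β - 16)) with hrdef
      have hr2 : r ^ 2 = α ^ 2 * β * (α ^ 2 * β - 16) :=
        Real.sq_sqrt (by nlinarith)
      have hr0 : (0:ℝ) ≤ r := Real.sqrt_nonneg _
      refine ⟨(α ^ 2 * β - r) / 4, ⟨?_, ?_⟩, ?_⟩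
      · -- 1 < x₀ : r < α²β - 4
        nlinarith [hr2, hr0]
      · -- x₀ < α : α²β - 4α < r
        nlinarith [hr2, hr0, sq_nonneg (α ^ 2 * β - 4 * α - r), mul_pos hα0 hα0]
      · have hquad : 2 * ((α ^ 2 * β - r) / 4) ^ 2
            - α ^ 2 * β * ((α ^ 2 * β - r) / 4) + 2 * (α ^ 2 * β) = 0 := by
          linear_combination hr2 / 8
        set x := (α ^ 2 * β - r) / 4 with hxdef
        have hT : α ^ 4 * β ^ 2 * Spoly α β α x =
            x ^ 4 - α ^ 2 * β * x ^ 3 + α ^ 3 * β ^ 2 * x ^ 2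
              - α ^ 4 * β ^ 2 * x + α ^ 4 * β ^ 2 := by
          unfold Spoly; field_simp; ring
        have hx1 : (1:ℝ) < x := by rw [hxdef]; nlinarith [hr2, hr0]
        have hsq : (2 * x ^ 2 - α ^ 2 * β * x + 2 * (α ^ 2 * β)) ^ 2 = 0 := by
          rw [hquad]; ring
        have hprod : 0 ≤ (α ^ 2 * β - 4 * α * β + 8) * (x ^ 2 * α ^ 2 * β) :=
          mul_nonneg hΔ (by positivity)
        nlinarith [hT, hsq, hprod, mul_pos (mul_pos (mul_pos hα0 hα0) (mul_pos hα0 hα0)) (mul_pos hβ0 hβ0)]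
  · -- Part B
    constructor
    · intro h
      by_cases h4 : 4 ≤ α
      · exact Or.inl h4
      · right
        push_neg at h4
        rw [le_div_iff₀ (by nlinarith : (0:ℝ) < α * (4 - α))]
        nlinarith
    · rintro (h4 | hb)
      · nlinarith [mul_nonneg (mul_nonneg hα0.le hβ0.le) (by linarith : (0:ℝ) ≤ α - 4)]
      · by_cases h4 : 4 ≤ α
        · nlinarith [mul_nonneg (mul_nonneg hα0.le hβ0.le) (by linarith : (0:ℝ) ≤ α - 4)]
        · push_neg at h4
          rw [le_div_iff₀ (by nlinarith : (0:ℝ) < α * (4 - α))] at hb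
          nlinarith
  · -- Part C
    constructor
    · rintro ⟨w, ⟨hw1, hw2⟩, hQ⟩
      have hss : α ^ 2 * s ^ 2 = α ^ 2 * β := by rw [hs2]
      nlinarith [sq_nonneg (α * s - 2 * w), hss, hQ]
    · intro hΔ
      have hu : s * (1 / s) = 1 := by field_simp
      have hαs : (0:ℝ) < α * s := mul_pos hα0 hs0
      refine ⟨α * s / 2, ⟨?_, ?_⟩, ?_⟩
      · nlinarith [hkey, hs2, hs0, hu, mul_pos hs0 hs0]
      · have h1 : (0:ℝ) < 1 / (α * s) := by positivity
        linarith
      · have hss : α ^ 2 * s ^ 2 = α ^ 2 * β := by rw [hs2]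
        nlinarith [hΔ, hss]
end

section
/- Let n ≥ 4 and let q₂, …, q_n be reals with q_k > 1 for all k, and set Q(x) = 1 − x + ∑_{k=2}^n (−1)^k x^k / (q₂^{k−1} q₃^{k−2} ⋯ q_{k−1}² q_k). Fix j with 1 ≤ j ≤ n − 1 and let x ∈ (q₂ q₃ ⋯ q_j, q₂ q₃ ⋯ q_j q_{j+1}) (for j = 1 this interval is (1, q₂)). Then the moduli of the consecutive terms of Q satisfy 1 < x < x²/q₂ < x³/(q₂² q₃) < ⋯ < x^j/(q₂^{j−1} q₃^{j−2} ⋯ q_j) and x^j/(q₂^{j−1} q₃^{j−2} ⋯ q_j) > x^{j+1}/(q₂^{j} q₃^{j−1} ⋯ q_j² q_{j+1}) > ⋯ > x^n/(q₂^{n−1} q₃^{n−2} ⋯ q_{n−1}² q_n). -/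
/-! Consecutive terms have ratio `qterm q (k + 1) x / qterm q k x = x / (q₂ ⋯ q_{k+1})`, and the
products `q₂ ⋯ q_m` increase with `m`; so the terms grow while `q₂ ⋯ q_{k+1} < x` and shrink once
`x < q₂ ⋯ q_{k+1}`. -/

/-- Denominator `q₂^{k-1} q₃^{k-2} ⋯ q_{k-1}² q_k` of the `k`-th coefficient. -/
noncomputable def qden (q : ℕ → ℝ) (k : ℕ) : ℝ :=
  ∏ i ∈ Finset.Icc 2 k, q i ^ (k + 1 - i)

/-- The `k`-th term `x^k / (q₂^{k-1} q₃^{k-2} ⋯ q_k)` (in modulus). -/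
noncomputable def qterm (q : ℕ → ℝ) (k : ℕ) (x : ℝ) : ℝ :=
  x ^ k / qden q k

/-- The product `q₂ q₃ ⋯ q_j` (equal to `1` for `j = 1`). -/
noncomputable def qprod (q : ℕ → ℝ) (j : ℕ) : ℝ :=
  ∏ i ∈ Finset.Icc 2 j, q i

lemma qden_succ (q : ℕ → ℝ) (k : ℕ) : qden q (k + 1) = qden q k * qprod q (k + 1) := by
  rcases Nat.eq_zero_or_pos k with rfl | hk
  · simp [qden, qprod]
  have hlast : ∏ i ∈ Finset.Icc 2 (k + 1), q i ^ (k + 1 - i)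
      = ∏ i ∈ Finset.Icc 2 k, q i ^ (k + 1 - i) := by
    rw [Finset.prod_Icc_succ_top (by omega)]
    simp
  rw [qden, qden, qprod, ← hlast, ← Finset.prod_mul_distrib]
  refine Finset.prod_congr rfl fun i hi => ?_
  rw [← pow_succ]
  congr 1
  grind

lemma qterm_succ (q : ℕ → ℝ) (k : ℕ) (x : ℝ) :
    qterm q (k + 1) x = qterm q k x * (x / qprod q (k + 1)) := by
  rw [qterm, qterm, qden_succ, pow_succ]
  ring

section

variable {q : ℕ → ℝ}

lemma qprod_pos {m : ℕ} (hq : ∀ i, 2 ≤ i → i ≤ m → 0 < q i) : 0 < qprod q m :=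
  Finset.prod_pos fun i hi => hq i (Finset.mem_Icc.1 hi).1 (Finset.mem_Icc.1 hi).2

lemma qden_pos {m : ℕ} (hq : ∀ i, 2 ≤ i → i ≤ m → 0 < q i) : 0 < qden q m :=
  Finset.prod_pos fun i hi => pow_pos (hq i (Finset.mem_Icc.1 hi).1 (Finset.mem_Icc.1 hi).2) _

lemma qterm_pos {m : ℕ} {x : ℝ} (hq : ∀ i, 2 ≤ i → i ≤ m → 0 < q i) (hx : 0 < x) :
    0 < qterm q m x :=
  div_pos (pow_pos hx m) (qden_pos hq)

lemma qprod_le_qprod {a b : ℕ} (hab : a ≤ b) (hq : ∀ i, 2 ≤ i → i ≤ b → 1 ≤ q i) :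
    qprod q a ≤ qprod q b :=
  Finset.prod_le_prod_of_subset_of_one_le (Finset.Icc_subset_Icc_right hab)
    (fun i hi => zero_le_one.trans (hq i (Finset.mem_Icc.1 hi).1 ((Finset.mem_Icc.1 hi).2.trans hab)))
    (fun i hi _ => hq i (Finset.mem_Icc.1 hi).1 (Finset.mem_Icc.1 hi).2)

lemma qterm_lt_qterm_succ_iff {k : ℕ} {x : ℝ} (hq : ∀ i, 2 ≤ i → i ≤ k + 1 → 0 < q i)
    (hx : 0 < x) : qterm q k x < qterm q (k + 1) x ↔ qprod q (k + 1) < x := by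
  rw [qterm_succ, lt_mul_iff_one_lt_right (qterm_pos (fun i h2 hi => hq i h2 (by omega)) hx),
    one_lt_div (qprod_pos hq)]

lemma qterm_succ_lt_qterm_iff {k : ℕ} {x : ℝ} (hq : ∀ i, 2 ≤ i → i ≤ k + 1 → 0 < q i)
    (hx : 0 < x) : qterm q (k + 1) x < qterm q k x ↔ x < qprod q (k + 1) := by
  rw [qterm_succ, mul_lt_iff_lt_one_right (qterm_pos (fun i h2 hi => hq i h2 (by omega)) hx),
    div_lt_one (qprod_pos hq)]

end

theorem qterm_monotonicity_general (n : ℕ) (q : ℕ → ℝ)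
    (hq : ∀ k, 2 ≤ k → k ≤ n → 1 < q k)
    (j : ℕ) (hj2 : j ≤ n - 1)
    (x : ℝ) (hx : x ∈ Set.Ioo (qprod q j) (qprod q (j + 1))) :
    (∀ k, 1 ≤ k → k ≤ j → qterm q (k - 1) x < qterm q k x) ∧
    (∀ k, j ≤ k → k < n → qterm q (k + 1) x < qterm q k x) := by
  obtain ⟨hjx, hxj⟩ := hx
  have hq_pos : ∀ i, 2 ≤ i → i ≤ n → 0 < q i := fun i h2 hi => one_pos.trans (hq i h2 hi)
  have hq_one : ∀ i, 2 ≤ i → i ≤ n → 1 ≤ q i := fun i h2 hi => (hq i h2 hi).le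
  have hx0 : 0 < x := (qprod_pos fun i h2 hi => hq_pos i h2 (by omega)).trans hjx
  refine ⟨fun k hk1 hkj => ?_, fun k hjk hkn => ?_⟩
  · obtain ⟨m, rfl⟩ : ∃ m, k = m + 1 := ⟨k - 1, by omega⟩
    rw [Nat.add_sub_cancel, qterm_lt_qterm_succ_iff (fun i h2 hi => hq_pos i h2 (by omega)) hx0]
    exact (qprod_le_qprod hkj fun i h2 hi => hq_one i h2 (by omega)).trans_lt hjx
  · rw [qterm_succ_lt_qterm_iff (fun i h2 hi => hq_pos i h2 (by omega)) hx0]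
    exact hxj.trans_le (qprod_le_qprod (by omega) fun i h2 hi => hq_one i h2 (by omega))

/-- For `q₂, …, q_n > 1`, `1 ≤ j ≤ n - 1` and
`x ∈ (q₂⋯q_j, q₂⋯q_j q_{j+1})`, the moduli of the consecutive terms of
`Q(x) = 1 - x + ∑_{k=2}^n (-1)^k x^k/(q₂^{k-1}⋯q_k)` strictly increase up to index `j`
and strictly decrease from index `j` on. -/
theorem qterm_monotonicity (n : ℕ) (hn : 4 ≤ n) (q : ℕ → ℝ)
    (hq : ∀ k, 2 ≤ k → k ≤ n → 1 < q k)
    (j : ℕ) (hj1 : 1 ≤ j) (hj2 : j ≤ n - 1)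
    (x : ℝ) (hx : x ∈ Set.Ioo (qprod q j) (qprod q (j + 1))) :
    (∀ k, 1 ≤ k → k ≤ j → qterm q (k - 1) x < qterm q k x) ∧
    (∀ k, j ≤ k → k < n → qterm q (k + 1) x < qterm q k x) :=
  qterm_monotonicity_general n q hq j hj2 x hx
end
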